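/- arXiv:1902.10696 — 2 statements merged into one kernel-verified Lean document; each statement's English description precedes it below -/
import Mathlib

section
/- Let H = H_Γ be the right-angled Artin group of a finite graph Γ = (V,E). For a subset A ⊆ V denote by [A] ⊆ H the subgroup generated by A. Then for any two subsets A, B ⊆ V one has [A] ∩ [B] = [A ∩ B]. -/
/-- The commutator relations of the right-angled Artin group of a graph. -/
def raagRels {V : Type} (G : SimpleGraph V) : Set (FreeGroup V) :=
  {w | ∃ u v : V, G.Adj u v ∧
    w = FreeGroup.of u * FreeGroup.of v * (FreeGroup.of u)⁻¹ * (FreeGroup.of v)⁻¹}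

/-- The right-angled Artin group of a graph. -/
abbrev RAAG {V : Type} (G : SimpleGraph V) := PresentedGroup (raagRels G)

/-- The generator of `RAAG G` corresponding to a vertex. -/
def raagGen {V : Type} (G : SimpleGraph V) (v : V) : RAAG G := PresentedGroup.of v

/-! For `S ⊆ V`, the endomorphism of `H_Γ` sending `v ↦ v` for `v ∈ S` and `v ↦ 1` otherwise is
well defined, because every relator maps to a commutator of commuting elements. It fixes `[S]`
pointwise and has image in `[S]`, so `[S]` is exactly its fixed subgroup; and the retractions
for `A` and `B` compose to the one for `A ∩ B`. An element fixed by the retractions for `A` and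
`B` is therefore fixed by the one for `A ∩ B`. -/

namespace RAAG

variable {V : Type} (G : SimpleGraph V)

theorem commute_raagGen {u v : V} (h : G.Adj u v) : Commute (raagGen G u) (raagGen G v) := by
  have hrel : raagGen G u * raagGen G v * (raagGen G u)⁻¹ * (raagGen G v)⁻¹ = 1 :=
    PresentedGroup.one_of_mem ⟨u, v, h, rfl⟩
  rw [mul_inv_eq_one, mul_inv_eq_iff_eq_mul] at hrel
  exact hrel

theorem lift_mulIndicator_rels_eq_one (S : Set V) :
    ∀ r ∈ raagRels G, FreeGroup.lift (S.mulIndicator (raagGen G)) r = 1 := by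
  rintro r ⟨u, v, huv, rfl⟩
  have hcomm : Commute (S.mulIndicator (raagGen G) u) (S.mulIndicator (raagGen G) v) := by
    by_cases hu : u ∈ S <;> by_cases hv : v ∈ S <;>
      simp [Set.mulIndicator_of_mem, Set.mulIndicator_of_notMem, hu, hv, commute_raagGen G huv]
  simp only [map_mul, map_inv, FreeGroup.lift_apply_of, hcomm.eq, mul_inv_cancel_right,
    mul_inv_cancel]

noncomputable def retraction (S : Set V) : RAAG G →* RAAG G :=
  PresentedGroup.toGroup (lift_mulIndicator_rels_eq_one G S)

theorem retraction_raagGen (S : Set V) (v : V) :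
    retraction G S (raagGen G v) = S.mulIndicator (raagGen G) v :=
  PresentedGroup.toGroup.of _

theorem retraction_comp (A B : Set V) :
    (retraction G A).comp (retraction G B) = retraction G (A ∩ B) := by
  refine PresentedGroup.ext fun v => ?_
  change retraction G A (retraction G B (raagGen G v)) = retraction G (A ∩ B) (raagGen G v)
  by_cases hA : v ∈ A <;> by_cases hB : v ∈ B <;>
    simp [Set.mulIndicator_of_mem, Set.mulIndicator_of_notMem, retraction_raagGen, hA, hB]

theorem retraction_mem_closure (S : Set V) (g : RAAG G) :
    retraction G S g ∈ Subgroup.closure (raagGen G '' S) := by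
  refine PresentedGroup.generated_by _ ((Subgroup.closure (raagGen G '' S)).comap _)
    (fun v => ?_) g
  change retraction G S (raagGen G v) ∈ Subgroup.closure (raagGen G '' S)
  by_cases hv : v ∈ S
  · rw [retraction_raagGen, Set.mulIndicator_of_mem hv]
    exact Subgroup.subset_closure ⟨v, hv, rfl⟩
  · rw [retraction_raagGen, Set.mulIndicator_of_notMem hv]
    exact one_mem _

theorem retraction_eq_self_of_mem_closure (S : Set V) {g : RAAG G}
    (hg : g ∈ Subgroup.closure (raagGen G '' S)) : retraction G S g = g := by
  induction hg using Subgroup.closure_induction with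
  | mem x hx =>
    obtain ⟨v, hv, rfl⟩ := hx
    rw [retraction_raagGen, Set.mulIndicator_of_mem hv]
  | one => exact map_one _
  | mul x y _ _ hx hy => rw [map_mul, hx, hy]
  | inv x _ hx => rw [map_inv, hx]

theorem mem_closure_iff_retraction_eq_self (S : Set V) (g : RAAG G) :
    g ∈ Subgroup.closure (raagGen G '' S) ↔ retraction G S g = g :=
  ⟨retraction_eq_self_of_mem_closure G S, fun h => h ▸ retraction_mem_closure G S g⟩

end RAAG

open RAAG in
theorem stmt3 {V : Type} (G : SimpleGraph V) (A B : Set V) :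
    Subgroup.closure (raagGen G '' A) ⊓ Subgroup.closure (raagGen G '' B) =
      Subgroup.closure (raagGen G '' (A ∩ B)) := by
  refine le_antisymm (fun g hg => ?_) (le_inf ?_ ?_)
  · obtain ⟨hA, hB⟩ := Subgroup.mem_inf.mp hg
    rw [mem_closure_iff_retraction_eq_self] at hA hB
    rw [mem_closure_iff_retraction_eq_self, ← retraction_comp, MonoidHom.comp_apply, hB, hA]
  · exact Subgroup.closure_mono (Set.image_mono Set.inter_subset_left)
  · exact Subgroup.closure_mono (Set.image_mono Set.inter_subset_right)
end

section
/- Let Γ = (V,E) be a finite graph, r ≥ 2, and suppose C_1, …, C_r are cliques with ∩_{i=1}^r C_i = ∅ and ∑_{i=1}^r |C_i| = z_r(Γ). If in addition ∩_{i=1}^{r−1} C_i = ∅, then z_r(Γ) = z_{r−1}(Γ) + c(Γ). -/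
/-- The clique number of a finite simple graph: the maximal cardinality of a clique. -/
noncomputable def cliqueNum {V : Type} [Fintype V] (G : SimpleGraph V) : ℕ :=
  sSup {n | ∃ C : Finset V, G.IsClique (C : Set V) ∧ C.card = n}

/-- `zNum G r` : the maximum of `∑ |C i|` over sequences of `r` cliques with empty
total intersection. -/
noncomputable def zNum {V : Type} [Fintype V] [DecidableEq V] (G : SimpleGraph V) (r : ℕ) : ℕ :=
  sSup {m | ∃ C : Fin r → Finset V, (∀ i, G.IsClique ((C i : Set V))) ∧
    Finset.univ.inf C = ∅ ∧ m = ∑ i, (C i).card}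

section Aux

variable {V : Type} [Fintype V] [DecidableEq V] (G : SimpleGraph V)

lemma zSet_bdd (r : ℕ) : BddAbove {m | ∃ C : Fin r → Finset V,
    (∀ i, G.IsClique ((C i : Set V))) ∧ Finset.univ.inf C = ∅ ∧ m = ∑ i, (C i).card} := by
  refine ⟨r * Fintype.card V, ?_⟩
  rintro m ⟨C, -, -, rfl⟩
  calc ∑ i, (C i).card ≤ ∑ _i : Fin r, Fintype.card V :=
        Finset.sum_le_sum fun i _ => Finset.card_le_univ _
    _ = r * Fintype.card V := by simp [Finset.sum_const, mul_comm]

lemma zSet_nonempty (r : ℕ) (hr : 0 < r) : Set.Nonempty {m | ∃ C : Fin r → Finset V,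
    (∀ i, G.IsClique ((C i : Set V))) ∧ Finset.univ.inf C = ∅ ∧ m = ∑ i, (C i).card} := by
  refine ⟨0, fun _ => ∅, fun i => by simp, ?_, by simp⟩
  have h := Finset.inf_le (f := fun _ : Fin r => (∅ : Finset V))
    (Finset.mem_univ (⟨0, hr⟩ : Fin r))
  exact Finset.subset_empty.mp h

lemma le_zNum {r : ℕ} (C : Fin r → Finset V) (h1 : ∀ i, G.IsClique ((C i : Set V)))
    (h2 : Finset.univ.inf C = ∅) : ∑ i, (C i).card ≤ zNum G r :=
  le_csSup (zSet_bdd G r) ⟨C, h1, h2, rfl⟩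

lemma zNum_mem {r : ℕ} (hr : 0 < r) : ∃ C : Fin r → Finset V,
    (∀ i, G.IsClique ((C i : Set V))) ∧ Finset.univ.inf C = ∅ ∧ zNum G r = ∑ i, (C i).card :=
  Nat.sSup_mem (zSet_nonempty G r hr) (zSet_bdd G r)

lemma le_cliqueNum (M : Finset V) (h : G.IsClique (M : Set V)) : M.card ≤ cliqueNum G :=
  le_csSup ⟨Fintype.card V, by rintro n ⟨C, -, rfl⟩; exact Finset.card_le_univ C⟩ ⟨M, h, rfl⟩

lemma cliqueNum_mem : ∃ M : Finset V, G.IsClique (M : Set V) ∧ M.card = cliqueNum G := by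
  have := Nat.sSup_mem (s := {n | ∃ C : Finset V, G.IsClique (C : Set V) ∧ C.card = n})
    ⟨0, ∅, by simp, by simp⟩
    ⟨Fintype.card V, by rintro n ⟨C, -, rfl⟩; exact Finset.card_le_univ C⟩
  obtain ⟨M, hM, hMc⟩ := this
  exact ⟨M, hM, hMc⟩

end Aux

theorem stmt6 {V : Type} [Fintype V] [DecidableEq V] (G : SimpleGraph V) (r : ℕ)
    (hr : 2 ≤ r) (C : Fin r → Finset V)
    (hcl : ∀ i, G.IsClique ((C i : Set V)))
    (hempty : Finset.univ.inf C = ∅)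
    (hmax : ∑ i, (C i).card = zNum G r)
    (hempty' : (Finset.univ.inf fun i : Fin (r - 1) => C (Fin.castLE (Nat.sub_le r 1) i)) = ∅) :
    zNum G r = zNum G (r - 1) + cliqueNum G := by
  obtain ⟨s, rfl⟩ : ∃ s, r = s + 1 := ⟨r - 1, by omega⟩
  simp only [Nat.add_sub_cancel] at hempty' ⊢
  have hcast : ∀ i : Fin s, Fin.castLE (Nat.sub_le (s + 1) 1) i = Fin.castSucc i := by
    intro i; exact Fin.ext rfl
  refine le_antisymm ?_ ?_
  · -- zNum G (s+1) ≤ zNum G s + cliqueNum G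
    rw [← hmax, Fin.sum_univ_castSucc]
    have hA : ∑ i : Fin s, (C i.castSucc).card ≤ zNum G s := by
      refine le_zNum G _ (fun i => hcl _) ?_
      exact hempty'
    have hB : (C (Fin.last s)).card ≤ cliqueNum G := le_cliqueNum G _ (hcl _)
    exact add_le_add hA hB
  · -- zNum G s + cliqueNum G ≤ zNum G (s+1)
    obtain ⟨D, hD1, hD2, hD3⟩ := zNum_mem G (r := s) (by omega)
    obtain ⟨M, hM1, hM2⟩ := cliqueNum_mem G
    set E : Fin (s + 1) → Finset V := Fin.snoc D M with hE
    have hE1 : ∀ i, G.IsClique ((E i : Set V)) := by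
      intro i
      induction i using Fin.lastCases with
      | last => simpa [hE, Fin.snoc_last] using hM1
      | cast j => simpa [hE, Fin.snoc_castSucc] using hD1 j
    have hE2 : Finset.univ.inf E = ∅ := by
      have h1 : Finset.univ.inf E ≤ Finset.univ.inf D := by
        refine Finset.le_inf fun j _ => ?_
        have := Finset.inf_le (f := E) (Finset.mem_univ j.castSucc)
        simpa [hE, Fin.snoc_castSucc] using this
      rw [hD2] at h1
      exact Finset.subset_empty.mp h1
    have hsum : ∑ i, (E i).card = zNum G s + cliqueNum G := by
      rw [Fin.sum_univ_castSucc]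
      simp only [hE, Fin.snoc_castSucc, Fin.snoc_last]
      rw [← hD3, hM2]
    calc zNum G s + cliqueNum G = ∑ i, (E i).card := hsum.symm
      _ ≤ zNum G (s + 1) := le_zNum G E hE1 hE2
end
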